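/- Let A be a locally finite hyperplane arrangement, ⊣ a valid order on chambers with minimal flats X_C, and C, E chambers. A Salvetti cell ⟨D,F⟩ lies in the fiber η_C⁻¹(E) (i.e. ⟨D,F⟩ ∈ N(C) and D^F = E) if and only if D = E^F, F ⊆ X_C, and supp(F) ⊆ s(C,E). -/

import Mathlib

open Metric Set MeasureTheory

noncomputable section

/-- A locally finite arrangement of affine hyperplanes in ℝⁿ, given by affine
equations `⟪a i, x⟫ = b i` with `a i ≠ 0`, indexed injectively by `ι`. -/
structure Arrangement (n : ℕ) (ι : Type) where
  a : ι → EuclideanSpace ℝ (Fin n)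
  b : ι → ℝ
  ha : ∀ i, a i ≠ 0
  inj : Function.Injective fun i => {x : EuclideanSpace ℝ (Fin n) | (inner ℝ (a i) x : ℝ) = b i}
  locFin : ∀ x : EuclideanSpace ℝ (Fin n), ∃ ε > 0,
    {i : ι | ∃ y ∈ Metric.ball x ε, (inner ℝ (a i) y : ℝ) = b i}.Finite

namespace Arrangement

variable {n : ℕ} {ι : Type} (A : Arrangement n ι)

/-- The defining affine functional of the `i`-th hyperplane. -/
def val (i : ι) (x : EuclideanSpace ℝ (Fin n)) : ℝ := (inner ℝ (A.a i) x : ℝ) - A.b i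

/-- The `i`-th hyperplane. -/
def hyperplane (i : ι) : Set (EuclideanSpace ℝ (Fin n)) := {x | A.val i x = 0}

/-- The sign vector of a point. -/
def signAt (x : EuclideanSpace ℝ (Fin n)) : ι → SignType := fun i => SignType.sign (A.val i x)

/-- The (relatively open) stratum with sign vector `σ`. -/
def openCell (σ : ι → SignType) : Set (EuclideanSpace ℝ (Fin n)) :=
  {x | ∀ i, SignType.sign (A.val i x) = σ i}

/-- The (closed) faces of the arrangement: closures of the strata. -/
def IsFace (F : Set (EuclideanSpace ℝ (Fin n))) : Prop :=
  ∃ x : EuclideanSpace ℝ (Fin n), F = closure (A.openCell (A.signAt x))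

/-- Chambers: closed faces of codimension 0. -/
def IsChamber (C : Set (EuclideanSpace ℝ (Fin n))) : Prop :=
  ∃ x : EuclideanSpace ℝ (Fin n), (∀ i, A.val i x ≠ 0) ∧
    C = closure (A.openCell (A.signAt x))

/-- The support of a subset: the hyperplanes containing it. -/
def supp (U : Set (EuclideanSpace ℝ (Fin n))) : Set ι := {i | U ⊆ A.hyperplane i}

/-- The set of hyperplanes separating two chambers. -/
def sep (C C' : Set (EuclideanSpace ℝ (Fin n))) : Set ι :=
  {i | ∀ x ∈ interior C, ∀ y ∈ interior C', A.val i x * A.val i y < 0}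

/-- `F` is a face of the chamber (or face) `C`. -/
def IsFaceOf (F C : Set (EuclideanSpace ℝ (Fin n))) : Prop := A.IsFace F ∧ F ⊆ C

/-- `A.IsCF C F D` means `D = C.F`: `D` is the unique chamber containing `F` and not
separated from `C` by any hyperplane of `supp F`. -/
def IsCF (C F D : Set (EuclideanSpace ℝ (Fin n))) : Prop :=
  A.IsChamber D ∧ F ⊆ D ∧ A.sep C D ∩ A.supp F = ∅

/-- `A.IsOpp D F E` means `E = D^F`: `E` is the chamber opposite to `D` with respect to
its face `F`, i.e. the hyperplanes separating `D` and `E` are exactly those containing `F`. -/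
def IsOpp (D F E : Set (EuclideanSpace ℝ (Fin n))) : Prop :=
  A.IsChamber E ∧ F ⊆ E ∧ A.sep D E = A.supp F

/-- Flats: nonempty intersections of subfamilies of hyperplanes (including ℝⁿ itself). -/
def IsFlat (X : Set (EuclideanSpace ℝ (Fin n))) : Prop :=
  X.Nonempty ∧ ∃ s : Set ι, X = ⋂ i ∈ s, A.hyperplane i

/-- A cell `⟨C, F⟩` of the Salvetti complex: a chamber `C` together with a face `F` of `C`. -/
structure Cell {n : ℕ} {ι : Type} (𝒜 : Arrangement n ι) where
  C : Set (EuclideanSpace ℝ (Fin n))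
  F : Set (EuclideanSpace ℝ (Fin n))
  isChamber : 𝒜.IsChamber C
  isFace : 𝒜.IsFace F
  faceLe : F ⊆ C

/-- The Salvetti order: `⟨C,F⟩ ≤ ⟨D,G⟩` iff `F ⪯ G` (i.e. `F ⊇ G`) and `D.F = C`. -/
def cellLE (c d : A.Cell) : Prop := d.F ⊆ c.F ∧ A.IsCF d.C c.F c.C

/-- The subcomplex `S(C)`: cells `⟨D,F⟩` with `D = C.F`. -/
def inS (C : Set (EuclideanSpace ℝ (Fin n))) (c : A.Cell) : Prop := A.IsCF C c.F c.C

/-- A strict total order on the chambers. -/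
def IsChamberOrder (lt : Set (EuclideanSpace ℝ (Fin n)) → Set (EuclideanSpace ℝ (Fin n)) → Prop) :
    Prop :=
  (∀ C C', A.IsChamber C → A.IsChamber C' → C ≠ C' → lt C C' ∨ lt C' C) ∧
  (∀ C, ¬ lt C C) ∧
  (∀ C C' C'', lt C C' → lt C' C'' → lt C C'')

/-- The upper ideal `J(C)` of the poset of flats determined by a total order on chambers. -/
def J (lt : Set (EuclideanSpace ℝ (Fin n)) → Set (EuclideanSpace ℝ (Fin n)) → Prop)
    (C : Set (EuclideanSpace ℝ (Fin n))) : Set (Set (EuclideanSpace ℝ (Fin n))) :=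
  {X | A.IsFlat X ∧ ∀ C', A.IsChamber C' → lt C' C → (A.supp X ∩ A.sep C C').Nonempty}

/-- A valid order: for each chamber `C`, the ideal `J(C)` is the principal upper ideal
(in the poset of flats ordered by reverse inclusion) generated by `X_C = |F_C|` for some
face `F_C` of `C`. -/
def IsValidOrder
    (lt : Set (EuclideanSpace ℝ (Fin n)) → Set (EuclideanSpace ℝ (Fin n)) → Prop) : Prop :=
  A.IsChamberOrder lt ∧
  ∀ C, A.IsChamber C → ∃ F_C, A.IsFaceOf F_C C ∧
    A.J lt C = {X | A.IsFlat X ∧ X ⊆ (affineSpan ℝ F_C : Set (EuclideanSpace ℝ (Fin n)))}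

/-- Membership in `N(C)`: cells of `S(C)` not lying in any earlier `S(C')`. -/
def inN (lt : Set (EuclideanSpace ℝ (Fin n)) → Set (EuclideanSpace ℝ (Fin n)) → Prop)
    (C : Set (EuclideanSpace ℝ (Fin n))) (c : A.Cell) : Prop :=
  A.inS C c ∧ ∀ C', A.IsChamber C' → lt C' C → ¬ A.inS C' c

/-- A point `x₀` is generic with respect to `A`: (i) chambers at equal distance from `x₀`
have the same metric projection of `x₀`, lying in their intersection; (ii) distances to
strictly comparable flats are strictly comparable. -/
def IsGeneric (x₀ : EuclideanSpace ℝ (Fin n)) : Prop :=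
  (∀ C C', A.IsChamber C → A.IsChamber C' → infDist x₀ C = infDist x₀ C' →
    ∀ p ∈ C, ∀ p' ∈ C', (∀ q ∈ C, dist x₀ p ≤ dist x₀ q) →
      (∀ q ∈ C', dist x₀ p' ≤ dist x₀ q) → p = p' ∧ p ∈ C ∩ C') ∧
  (∀ L L', A.IsFlat L → A.IsFlat L' → L' ⊂ L → infDist x₀ L < infDist x₀ L')

end Arrangement

open Topology Filter

/-!
Everything reduces to sign vectors. By local finiteness a stratum with nowhere-vanishing sign
vector is open and is the interior of its closure, so the hyperplanes separating two chambers are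
the coordinates where their sign vectors differ; hence `s(C,E) = s(C,D) ∆ s(D,E)` for any three
chambers. For a face `F`, `supp F` is the zero set of its sign vector, and the flat
`X = ⋂_{i ∈ supp F} H_i` lies in the affine span of `F`; so `F ⊆ X_C` iff `X ∈ J(C)`, i.e. iff
every chamber `C' ⊣ C` is separated from `C` by a hyperplane containing `F`, which is exactly
the condition for `⟨D,F⟩ ∈ S(C)` to lie in no earlier `S(C')`. The remaining conditions match
up through the symmetric-difference identity.
-/

lemma sign_lineMap_eq_sign_right {a b t : ℝ} (hab : a ≠ 0 → SignType.sign a = SignType.sign b)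
    (ht₀ : 0 < t) (ht₁ : t ≤ 1) :
    SignType.sign (AffineMap.lineMap a b t) = SignType.sign b := by
  rw [AffineMap.lineMap_apply_module, smul_eq_mul, smul_eq_mul]
  rcases lt_trichotomy b 0 with hb | rfl | hb
  · have ha : a ≤ 0 := by
      by_contra! ha
      simpa [sign_pos ha, sign_neg hb] using hab ha.ne'
    rw [sign_neg hb, sign_neg (by nlinarith)]
  · have ha : a = 0 := by
      by_contra ha
      simpa [sign_eq_zero_iff, ha] using hab ha
    simp [ha]
  · have ha : 0 ≤ a := by
      by_contra! ha
      simpa [sign_pos hb, sign_neg ha] using hab ha.ne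
    rw [sign_pos hb, sign_pos (by nlinarith)]

lemma setOf_sign_ne_neg_eq {s : SignType} (hs : s ≠ 0) :
    {r : ℝ | SignType.sign r ≠ -s} = if s = 1 then Ici 0 else Iic 0 := by
  rcases s with _ | _ | _
  · exact absurd rfl hs
  · ext r; simp [sign_eq_one_iff]
  · ext r; simp [sign_eq_neg_one_iff]

lemma isClosed_setOf_sign_ne_neg {s : SignType} (hs : s ≠ 0) :
    IsClosed {r : ℝ | SignType.sign r ≠ -s} := by
  rw [setOf_sign_ne_neg_eq hs]
  split_ifs
  exacts [isClosed_Ici, isClosed_Iic]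

lemma interior_setOf_sign_ne_neg {s : SignType} (hs : s ≠ 0) :
    interior {r : ℝ | SignType.sign r ≠ -s} = {r | SignType.sign r = s} := by
  rw [setOf_sign_ne_neg_eq hs]
  rcases s with _ | _ | _
  · exact absurd rfl hs
  · ext r; simp [sign_eq_neg_one_iff]
  · ext r; simp [sign_eq_one_iff]

lemma SignType.eq_of_ne_neg {a b : SignType} (ha : a ≠ 0) (hb : b ≠ 0) (h : a ≠ -b) : a = b := by
  revert a b; decide

lemma SignType.mul_eq_neg_one_iff_ne {a b : SignType} (ha : a ≠ 0) (hb : b ≠ 0) :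
    a * b = -1 ↔ a ≠ b := by
  revert a b; decide

lemma SignType.ne_iff_ne_iff_eq {a b c : SignType} (ha : a ≠ 0) (hb : b ≠ 0) (hc : c ≠ 0) :
    a ≠ c ↔ (a ≠ b ↔ b = c) := by
  revert a b c; decide

namespace Arrangement

variable {n : ℕ} {ι : Type} (A : Arrangement n ι)

lemma continuous_val (i : ι) : Continuous (A.val i) :=
  (continuous_const.inner continuous_id).sub continuous_const

lemma val_lineMap (i : ι) (x y : EuclideanSpace ℝ (Fin n)) (t : ℝ) :
    A.val i (AffineMap.lineMap x y t) = AffineMap.lineMap (A.val i x) (A.val i y) t := by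
  simp only [val, AffineMap.lineMap_apply_module, inner_add_right, real_inner_smul_right,
    smul_eq_mul]
  ring

lemma isOpenMap_val (i : ι) : IsOpenMap (A.val i) := by
  have hne : innerₛₗ ℝ (A.a i) ≠ 0 := fun h => A.ha i <| by
    simpa using LinearMap.congr_fun h (A.a i)
  exact (isOpenMap_sub_right (A.b i)).comp
    ((innerₛₗ ℝ (A.a i)).isOpenMap_of_finiteDimensional (LinearMap.surjective_of_ne_zero hne))

lemma mem_openCell {σ : ι → SignType} {x : EuclideanSpace ℝ (Fin n)} :
    x ∈ A.openCell σ ↔ A.signAt x = σ :=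
  funext_iff.symm

lemma mem_openCell_signAt (x : EuclideanSpace ℝ (Fin n)) : x ∈ A.openCell (A.signAt x) :=
  A.mem_openCell.2 rfl

lemma signAt_ne_zero {x : EuclideanSpace ℝ (Fin n)} (hx : ∀ i, A.val i x ≠ 0) (i : ι) :
    A.signAt x i ≠ 0 :=
  sign_ne_zero.2 (hx i)

lemma eventually_sign_val_eq {i : ι} {z : EuclideanSpace ℝ (Fin n)} (hz : A.val i z ≠ 0) :
    ∀ᶠ y in 𝓝 z, SignType.sign (A.val i y) = SignType.sign (A.val i z) :=
  ((continuousAt_sign_of_ne_zero hz).comp (A.continuous_val i).continuousAt).eventually_mem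
    (mem_nhds_discrete.2 (mem_singleton _))

lemma sign_val_eq_of_isPreconnected {s : Set (EuclideanSpace ℝ (Fin n))} (hs : IsPreconnected s)
    {i : ι} (h₀ : ∀ y ∈ s, A.val i y ≠ 0) {x y : EuclideanSpace ℝ (Fin n)} (hx : x ∈ s)
    (hy : y ∈ s) : SignType.sign (A.val i x) = SignType.sign (A.val i y) :=
  hs.constant (fun w hw => ((continuousAt_sign_of_ne_zero (h₀ w hw)).comp
    (A.continuous_val i).continuousAt).continuousWithinAt) hx hy

lemma eventually_signAt_eq (z : EuclideanSpace ℝ (Fin n)) :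
    ∀ᶠ y in 𝓝 z, (∀ i, A.val i z = 0 → A.val i y = 0) → A.signAt y = A.signAt z := by
  obtain ⟨ε, hε, hfin⟩ := A.locFin z
  have hnear := (eventually_all_finite (hfin.inter_of_left {i | A.val i z ≠ 0})).2
    fun i hi => A.eventually_sign_val_eq hi.2
  filter_upwards [hnear, ball_mem_nhds z hε] with y hy hyz hzero
  funext i
  by_cases hz : A.val i z = 0
  · simp [signAt, hz, hzero i hz]
  by_cases hi : ∃ w ∈ ball z ε, (inner ℝ (A.a i) w : ℝ) = A.b i
  · exact hy i ⟨hi, hz⟩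
  · exact A.sign_val_eq_of_isPreconnected (convex_ball z ε).isPreconnected
      (fun w hw h => hi ⟨w, hw, by simpa [val, sub_eq_zero] using h⟩) hyz (mem_ball_self hε)

lemma isOpen_openCell {σ : ι → SignType} (hσ : ∀ i, σ i ≠ 0) : IsOpen (A.openCell σ) := by
  refine isOpen_iff_mem_nhds.2 fun z hz => ?_
  obtain rfl := A.mem_openCell.1 hz
  filter_upwards [A.eventually_signAt_eq z] with y hy
  exact A.mem_openCell.2 (hy fun i h => absurd (sign_eq_zero_iff.2 h) (hσ i))

lemma closure_openCell_subset {σ : ι → SignType} {i : ι} (hσ : σ i ≠ 0) :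
    closure (A.openCell σ) ⊆ A.val i ⁻¹' {r | SignType.sign r ≠ -σ i} :=
  closure_minimal (fun x hx => show _ ≠ _ by rw [hx i]; revert hσ; cases σ i <;> decide)
    ((isClosed_setOf_sign_ne_neg hσ).preimage (A.continuous_val i))

lemma interior_closure_openCell {σ : ι → SignType} (hσ : ∀ i, σ i ≠ 0) :
    interior (closure (A.openCell σ)) = A.openCell σ := by
  refine (interior_maximal subset_closure (A.isOpen_openCell hσ)).antisymm' fun x hx i => ?_
  have := interior_mono (A.closure_openCell_subset (hσ i)) hx
  rwa [← (A.isOpenMap_val i).preimage_interior_eq_interior_preimage (A.continuous_val i),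
    interior_setOf_sign_ne_neg (hσ i)] at this

lemma mem_sep_closure_openCell_iff {x y : EuclideanSpace ℝ (Fin n)} (hx : ∀ i, A.val i x ≠ 0)
    (hy : ∀ i, A.val i y ≠ 0) (i : ι) :
    i ∈ A.sep (closure (A.openCell (A.signAt x))) (closure (A.openCell (A.signAt y))) ↔
      A.signAt x i ≠ A.signAt y i := by
  have key : ∀ u ∈ A.openCell (A.signAt x), ∀ v ∈ A.openCell (A.signAt y),
      A.val i u * A.val i v < 0 ↔ A.signAt x i ≠ A.signAt y i := fun u hu v hv => by
    rw [← sign_eq_neg_one_iff, sign_mul, hu i, hv i,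
      SignType.mul_eq_neg_one_iff_ne (A.signAt_ne_zero hx i) (A.signAt_ne_zero hy i)]
  show (∀ u ∈ interior _, ∀ v ∈ interior _, _) ↔ _
  rw [A.interior_closure_openCell (A.signAt_ne_zero hx),
    A.interior_closure_openCell (A.signAt_ne_zero hy)]
  have hx₀ := A.mem_openCell_signAt x
  have hy₀ := A.mem_openCell_signAt y
  exact ⟨fun h => (key x hx₀ y hy₀).1 (h x hx₀ y hy₀), fun h u hu v hv => (key u hu v hv).2 h⟩

lemma sep_comm (C D : Set (EuclideanSpace ℝ (Fin n))) : A.sep C D = A.sep D C := by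
  ext i
  exact ⟨fun h x hx y hy => mul_comm (A.val i y) _ ▸ h y hy x hx,
    fun h x hx y hy => mul_comm (A.val i y) _ ▸ h y hy x hx⟩

/-- That is, `sep C E = sep C D ∆ sep D E`. -/
lemma mem_sep_iff_not_iff {C D E : Set (EuclideanSpace ℝ (Fin n))} (hC : A.IsChamber C)
    (hD : A.IsChamber D) (hE : A.IsChamber E) (i : ι) :
    i ∈ A.sep C E ↔ (i ∈ A.sep C D ↔ i ∉ A.sep D E) := by
  obtain ⟨x, hx, rfl⟩ := hC
  obtain ⟨y, hy, rfl⟩ := hD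
  obtain ⟨w, hw, rfl⟩ := hE
  rw [A.mem_sep_closure_openCell_iff hx hw, A.mem_sep_closure_openCell_iff hx hy,
    A.mem_sep_closure_openCell_iff hy hw]
  simpa using SignType.ne_iff_ne_iff_eq (A.signAt_ne_zero hx i) (A.signAt_ne_zero hy i)
    (A.signAt_ne_zero hw i)

lemma supp_closure_openCell_signAt (z : EuclideanSpace ℝ (Fin n)) :
    A.supp (closure (A.openCell (A.signAt z))) = {i | A.val i z = 0} := by
  ext i
  refine ⟨fun h => h (subset_closure (A.mem_openCell_signAt z)), fun h => ?_⟩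
  refine closure_minimal (fun w hw => ?_) (isClosed_eq (A.continuous_val i) continuous_const)
  exact sign_eq_zero_iff.1 ((hw i).trans (sign_eq_zero_iff.2 h))

lemma closure_openCell_subset_closure_openCell_iff {x z : EuclideanSpace ℝ (Fin n)}
    (hx : ∀ i, A.val i x ≠ 0) :
    closure (A.openCell (A.signAt z)) ⊆ closure (A.openCell (A.signAt x)) ↔
      ∀ i, A.val i z ≠ 0 → A.signAt z i = A.signAt x i := by
  refine ⟨fun h i hz => ?_, fun h => closure_minimal (fun w hw => ?_) isClosed_closure⟩
  · exact SignType.eq_of_ne_neg (sign_ne_zero.2 hz) (A.signAt_ne_zero hx i)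
      (A.closure_openCell_subset (A.signAt_ne_zero hx i)
        (h (subset_closure (A.mem_openCell_signAt z))))
  · have hlim : Tendsto (fun t : ℝ => AffineMap.lineMap w x t) (𝓝[>] 0) (𝓝 w) :=
      ((AffineMap.lineMap_continuous (R := ℝ)).tendsto' 0 w (by simp)).mono_left
        nhdsWithin_le_nhds
    refine mem_closure_of_tendsto hlim ?_
    filter_upwards [Ioc_mem_nhdsGT zero_lt_one] with t ht i
    rw [A.val_lineMap]
    refine sign_lineMap_eq_sign_right (fun hw₀ => ?_) ht.1 ht.2
    rw [hw i]
    exact h i fun hz => hw₀ (sign_eq_zero_iff.1 ((hw i).trans (sign_eq_zero_iff.2 hz)))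

lemma subset_of_sep_subset_supp {F D E : Set (EuclideanSpace ℝ (Fin n))} (hF : A.IsFace F)
    (hD : A.IsChamber D) (hE : A.IsChamber E) (hFD : F ⊆ D) (hsep : A.sep D E ⊆ A.supp F) :
    F ⊆ E := by
  obtain ⟨z, rfl⟩ := hF
  obtain ⟨x, hx, rfl⟩ := hD
  obtain ⟨y, hy, rfl⟩ := hE
  rw [A.closure_openCell_subset_closure_openCell_iff hx] at hFD
  rw [A.closure_openCell_subset_closure_openCell_iff hy]
  intro i hz
  have hxy : i ∉ A.sep _ _ := fun h => hz (by simpa [supp_closure_openCell_signAt] using hsep h)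
  rw [A.mem_sep_closure_openCell_iff hx hy, not_not] at hxy
  rw [hFD i hz, hxy]

lemma isOpp_comm {D E F : Set (EuclideanSpace ℝ (Fin n))} (hD : A.IsChamber D)
    (hE : A.IsChamber E) (hF : A.IsFace F) (hFD : F ⊆ D) : A.IsOpp D F E ↔ A.IsOpp E F D := by
  rw [IsOpp, IsOpp, A.sep_comm E]
  exact ⟨fun ⟨_, _, h⟩ => ⟨hD, hFD, h⟩,
    fun ⟨_, _, h⟩ => ⟨hE, A.subset_of_sep_subset_supp hF hD hE hFD h.le, h⟩⟩

lemma isCF_iff_supp_subset_sep {C D E F : Set (EuclideanSpace ℝ (Fin n))} (hC : A.IsChamber C)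
    (hE : A.IsChamber E) (hED : A.IsOpp E F D) : A.IsCF C F D ↔ A.supp F ⊆ A.sep C E := by
  obtain ⟨hD, hFD, hsep⟩ := hED
  simp only [IsCF, hD, hFD, true_and, eq_empty_iff_forall_notMem, mem_inter_iff, not_and]
  refine forall_congr' fun i => ?_
  have := A.mem_sep_iff_not_iff hC hD hE i
  rw [A.sep_comm D, hsep] at this
  tauto

lemma isCF_iff_of_isCF {C C' D F : Set (EuclideanSpace ℝ (Fin n))} (hC : A.IsChamber C)
    (hC' : A.IsChamber C') (hCD : A.IsCF C F D) :
    A.IsCF C' F D ↔ A.supp F ∩ A.sep C C' = ∅ := by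
  obtain ⟨hD, hFD, hsep⟩ := hCD
  simp only [IsCF, hD, hFD, true_and, eq_empty_iff_forall_notMem, mem_inter_iff, not_and] at hsep ⊢
  refine ⟨fun h i hi hCC' => ?_, fun h i hC'D hi => h i hi ?_⟩
  all_goals
    have := A.mem_sep_iff_not_iff hC hD hC' i
    rw [A.sep_comm D] at this
    have := hsep i
    tauto

lemma inN_iff (lt : Set (EuclideanSpace ℝ (Fin n)) → Set (EuclideanSpace ℝ (Fin n)) → Prop)
    {C : Set (EuclideanSpace ℝ (Fin n))} (hC : A.IsChamber C) (c : A.Cell) :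
    A.inN lt C c ↔
      A.inS C c ∧ ∀ C', A.IsChamber C' → lt C' C → (A.supp c.F ∩ A.sep C C').Nonempty :=
  and_congr_right fun hCD => forall₃_congr fun C' hC' _ => by
    rw [inS, A.isCF_iff_of_isCF hC hC' hCD, nonempty_iff_ne_empty]

/-- For a face `F` this is the flat `|F|` spanned by `F`
(see `IsFace.subset_iff_supportFlat_subset`). -/
def supportFlat (U : Set (EuclideanSpace ℝ (Fin n))) : Set (EuclideanSpace ℝ (Fin n)) :=
  ⋂ i ∈ A.supp U, A.hyperplane i

lemma subset_supportFlat (U : Set (EuclideanSpace ℝ (Fin n))) : U ⊆ A.supportFlat U :=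
  subset_iInter₂ fun _ h => h

lemma supp_supportFlat (U : Set (EuclideanSpace ℝ (Fin n))) :
    A.supp (A.supportFlat U) = A.supp U :=
  Subset.antisymm (fun _ h => (A.subset_supportFlat U).trans h) fun _ hi => biInter_subset_of_mem hi

lemma isFlat_supportFlat {U : Set (EuclideanSpace ℝ (Fin n))} (hU : U.Nonempty) :
    A.IsFlat (A.supportFlat U) :=
  ⟨hU.mono (A.subset_supportFlat U), _, rfl⟩

variable {A} in
lemma IsFace.nonempty {F : Set (EuclideanSpace ℝ (Fin n))} (hF : A.IsFace F) : F.Nonempty := by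
  obtain ⟨z, rfl⟩ := hF
  exact ⟨z, subset_closure (A.mem_openCell_signAt z)⟩

/-- Moving from `z` towards a point of its support flat keeps the sign vector for a short while,
so the whole flat lies in the affine span of the stratum of `z`. -/
lemma supportFlat_closure_openCell_subset_affineSpan (z : EuclideanSpace ℝ (Fin n)) :
    A.supportFlat (closure (A.openCell (A.signAt z))) ⊆ affineSpan ℝ (A.openCell (A.signAt z)) := by
  intro y hy
  have hyz : ∀ i, A.val i z = 0 → A.val i y = 0 := fun i hi =>
    mem_iInter₂.1 hy i (by rw [supp_closure_openCell_signAt]; exact hi)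
  have hlim : Tendsto (fun t : ℝ => AffineMap.lineMap z y t) (𝓝[≠] 0) (𝓝 z) :=
    ((AffineMap.lineMap_continuous (R := ℝ)).tendsto' 0 z (by simp)).mono_left nhdsWithin_le_nhds
  obtain ⟨t, ht, ht₀⟩ :=
    ((hlim.eventually (A.eventually_signAt_eq z)).and self_mem_nhdsWithin).exists
  have hmem : AffineMap.lineMap z y t ∈ A.openCell (A.signAt z) :=
    A.mem_openCell.2 (ht fun i hi => by rw [A.val_lineMap, hi, hyz i hi]; simp)
  have hy_eq : AffineMap.lineMap z (AffineMap.lineMap z y t) t⁻¹ = y := by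
    simp [AffineMap.lineMap_apply_module', smul_smul, inv_mul_cancel₀ ht₀]
  rw [← hy_eq]
  exact AffineMap.lineMap_mem _ (subset_affineSpan ℝ _ (A.mem_openCell_signAt z))
    (subset_affineSpan ℝ _ hmem)

variable {A} in
lemma IsFace.subset_iff_supportFlat_subset {F : Set (EuclideanSpace ℝ (Fin n))} (hF : A.IsFace F)
    (W : AffineSubspace ℝ (EuclideanSpace ℝ (Fin n))) : F ⊆ W ↔ A.supportFlat F ⊆ W := by
  refine ⟨fun h => ?_, (A.subset_supportFlat F).trans⟩
  obtain ⟨z, rfl⟩ := hF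
  exact (A.supportFlat_closure_openCell_subset_affineSpan z).trans
    (affineSpan_le.2 (subset_closure.trans h))

variable {A} in
lemma IsFace.subset_iff_of_J_eq
    {lt : Set (EuclideanSpace ℝ (Fin n)) → Set (EuclideanSpace ℝ (Fin n)) → Prop}
    {C F : Set (EuclideanSpace ℝ (Fin n))} {W : AffineSubspace ℝ (EuclideanSpace ℝ (Fin n))}
    (hF : A.IsFace F) (hJ : A.J lt C = {X | A.IsFlat X ∧ X ⊆ W}) :
    F ⊆ W ↔ ∀ C', A.IsChamber C' → lt C' C → (A.supp F ∩ A.sep C C').Nonempty := by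
  have hX := Set.ext_iff.1 hJ (A.supportFlat F)
  simp only [J, mem_ofPred_eq, supp_supportFlat, A.isFlat_supportFlat hF.nonempty, true_and]
    at hX
  rw [hF.subset_iff_supportFlat_subset, ← hX]

end Arrangement

theorem stmt9_general {n : ℕ} {ι : Type} (A : Arrangement n ι)
    (lt : Set (EuclideanSpace ℝ (Fin n)) → Set (EuclideanSpace ℝ (Fin n)) → Prop)
    (C E F_C : Set (EuclideanSpace ℝ (Fin n)))
    (hC : A.IsChamber C) (hE : A.IsChamber E)
    (hJ : A.J lt C =
      {X | A.IsFlat X ∧ X ⊆ (affineSpan ℝ F_C : Set (EuclideanSpace ℝ (Fin n)))})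
    (c : A.Cell) :
    (A.inN lt C c ∧ A.IsOpp c.C c.F E) ↔
      (A.IsOpp E c.F c.C ∧ c.F ⊆ (affineSpan ℝ F_C : Set (EuclideanSpace ℝ (Fin n))) ∧
        A.supp c.F ⊆ A.sep C E) := by
  rw [A.inN_iff lt hC, A.isOpp_comm c.isChamber hE c.isFace c.faceLe,
    c.isFace.subset_iff_of_J_eq hJ]
  constructor
  · rintro ⟨⟨hCD, hmin⟩, hED⟩
    exact ⟨hED, hmin, (A.isCF_iff_supp_subset_sep hC hE hED).1 hCD⟩
  · rintro ⟨hED, hmin, hsupp⟩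
    exact ⟨⟨(A.isCF_iff_supp_subset_sep hC hE hED).2 hsupp, hmin⟩, hED⟩

/-- Characterization of the fiber `η_C⁻¹(E)`: a Salvetti cell `⟨D,F⟩` satisfies
`⟨D,F⟩ ∈ N(C)` and `D^F = E` iff `D = E^F`, `F ⊆ X_C` and `supp(F) ⊆ s(C,E)`. -/
theorem stmt9 {n : ℕ} {ι : Type} (A : Arrangement n ι)
    (lt : Set (EuclideanSpace ℝ (Fin n)) → Set (EuclideanSpace ℝ (Fin n)) → Prop)
    (hvalid : A.IsValidOrder lt)
    (C E F_C : Set (EuclideanSpace ℝ (Fin n)))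
    (hC : A.IsChamber C) (hE : A.IsChamber E) (hFC : A.IsFaceOf F_C C)
    (hJ : A.J lt C =
      {X | A.IsFlat X ∧ X ⊆ (affineSpan ℝ F_C : Set (EuclideanSpace ℝ (Fin n)))})
    (c : A.Cell) :
    (A.inN lt C c ∧ A.IsOpp c.C c.F E) ↔
      (A.IsOpp E c.F c.C ∧ c.F ⊆ (affineSpan ℝ F_C : Set (EuclideanSpace ℝ (Fin n))) ∧
        A.supp c.F ⊆ A.sep C E) :=
  stmt9_general A lt C E F_C hC hE hJ c
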